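/- arXiv:1804.05378 — 3 statements merged into one kernel-verified Lean document; each statement's English description precedes it below -/
import Mathlib

section
/- Let (Ω, 𝒜, μ) be a measure space and let W : Ω × {−1,1}^K → ℝ be such that for each a, x ↦ W(x,a) is measurable, W(x,a) ≥ 0 for all (x,a), and x ↦ Σ_a W(x,a) is μ-integrable. For a measurable rule D : Ω → {−1,1}^K define R01(D) = ∫ Σ_a W(x,a)·1{a ≠ D(x)} dμ(x) and RH(D) = ∫ Σ_a W(x,a)·(1/K)·Σ_{k=1}^K 1{a_k ≠ D_k(x)} dμ(x). Suppose that for μ-almost every x, c_k(W(x,·)) ≠ 0 for all k and the vector s(x) ∈ {−1,1}^K with s_k(x) = sign(c_k(W(x,·))) maximizes a ↦ W(x,a) over {−1,1}^K. Then every measurable rule f with RH(f) = inf over measurable rules D of RH(D) also satisfies R01(f) = inf over measurable rules D of R01(D). (Fisher consistency of outcome weighted Hamming loss, integrated form.) -/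
open Finset

noncomputable section

/-- The cube `{-1,1}^K` as a finite set of real vectors. -/
def cube (K : ℕ) : Finset (Fin K → ℝ) :=
  Finset.univ.image (fun b : Fin K → Bool => fun k => if b k then 1 else -1)

lemma cube_nonempty (K : ℕ) : (cube K).Nonempty :=
  Finset.Nonempty.image Finset.univ_nonempty _

lemma univ_fin_nonempty {K : ℕ} (hK : 1 ≤ K) :
    (Finset.univ : Finset (Fin K)).Nonempty :=
  ⟨⟨0, hK⟩, Finset.mem_univ _⟩

/-- Outcome weighted 0-1 risk at a fixed covariate value:
`R01(d) = Σ_{a ∈ {-1,1}^K} w(a) · 1{a ≠ d}`. -/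
def R01 {K : ℕ} (w : (Fin K → ℝ) → ℝ) (d : Fin K → ℝ) : ℝ :=
  ∑ a ∈ cube K, w a * (if a = d then 0 else 1)

/-- Outcome weighted Hamming risk at a fixed covariate value:
`RH(d) = Σ_{a ∈ {-1,1}^K} w(a) · (1/K) Σ_k 1{a_k ≠ d_k}`. -/
def RH {K : ℕ} (w : (Fin K → ℝ) → ℝ) (d : Fin K → ℝ) : ℝ :=
  ∑ a ∈ cube K, w a * ((1 / (K : ℝ)) * ∑ k : Fin K, if a k = d k then 0 else 1)

/-- Contrast of treatment `k`:
`c_k(w) = Σ_{a : a_k = 1} w(a) - Σ_{a : a_k = -1} w(a)`. -/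
def contrast {K : ℕ} (w : (Fin K → ℝ) → ℝ) (k : Fin K) : ℝ :=
  ∑ a ∈ (cube K).filter (fun a => a k = 1), w a
    - ∑ a ∈ (cube K).filter (fun a => a k = -1), w a

open MeasureTheory

/-- Integrated outcome weighted 0-1 risk of a rule `D`. -/
def R01int {Ω : Type*} [MeasurableSpace Ω] (μ : Measure Ω) (K : ℕ)
    (W : Ω → (Fin K → ℝ) → ℝ) (D : Ω → Fin K → ℝ) : ℝ :=
  ∫ x, ∑ a ∈ cube K, W x a * (if a = D x then 0 else 1) ∂μ

/-- Integrated outcome weighted Hamming risk of a rule `D`. -/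
def RHint {Ω : Type*} [MeasurableSpace Ω] (μ : Measure Ω) (K : ℕ)
    (W : Ω → (Fin K → ℝ) → ℝ) (D : Ω → Fin K → ℝ) : ℝ :=
  ∫ x, ∑ a ∈ cube K,
    W x a * ((1 / (K : ℝ)) * ∑ k : Fin K, if a k = D x k then 0 else 1) ∂μ

/-! The Hamming risk is an affine function of the vector of products `d k * c_k`:
`RH w d = (1/K) Σ_k (Σ_a w a - d k * c_k) / 2`. Over the cube it is therefore minimised
coordinatewise by `d k = sign c_k`, uniquely when no contrast vanishes. Hence a rule minimising the
integrated Hamming risk agrees almost everywhere with the contrast sign vector, which by assumption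
maximises the weight and so minimises the pointwise 0-1 risk `Σ_a w a - w d`. -/

section Pointwise

variable {K : ℕ}

theorem mem_cube_iff {a : Fin K → ℝ} : a ∈ cube K ↔ ∀ k, a k = 1 ∨ a k = -1 := by
  constructor
  · simp only [cube, mem_image, mem_univ, true_and]
    rintro ⟨b, rfl⟩ k
    by_cases hb : b k <;> simp [hb]
  · intro h
    simp only [cube, mem_image, mem_univ, true_and]
    refine ⟨fun k => decide (a k = 1), funext fun k => ?_⟩
    rcases h k with hk | hk <;> norm_num [hk]

/-- `fun k => Real.sign (contrast w k)`, except that a vanishing contrast gives `-1` rather than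
`0`, so that the vector always lies in the cube. -/
def signVec (w : (Fin K → ℝ) → ℝ) : Fin K → ℝ :=
  fun k => if 0 < contrast w k then 1 else -1

theorem signVec_mem_cube (w : (Fin K → ℝ) → ℝ) : signVec w ∈ cube K :=
  mem_cube_iff.2 fun k => by unfold signVec; split_ifs <;> simp

theorem signVec_eq_sign {w : (Fin K → ℝ) → ℝ} (hc : ∀ k, contrast w k ≠ 0) :
    signVec w = fun k => Real.sign (contrast w k) := by
  funext k
  rcases (hc k).lt_or_gt with hneg | hpos
  · simp [signVec, hneg.not_gt, Real.sign_of_neg hneg]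
  · simp [signVec, hpos, Real.sign_of_pos hpos]

theorem contrast_eq_sum_mul (w : (Fin K → ℝ) → ℝ) (k : Fin K) :
    contrast w k = ∑ a ∈ cube K, w a * a k := by
  have hneg : (cube K).filter (fun a => a k = -1) = (cube K).filter (fun a => ¬a k = 1) :=
    filter_congr fun a ha => by rcases mem_cube_iff.1 ha k with h | h <;> norm_num [h]
  rw [contrast, hneg, ← sum_filter_add_sum_filter_not (cube K) (fun a => a k = 1),
    sub_eq_add_neg, ← sum_neg_distrib]
  congr 1 <;> refine sum_congr rfl fun a ha => ?_
  · simp [(mem_filter.1 ha).2]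
  · obtain ⟨ha, h1⟩ := mem_filter.1 ha
    rcases mem_cube_iff.1 ha k with h | h
    · exact absurd h h1
    · simp [h]

theorem sum_mul_ite_apply_eq (w : (Fin K → ℝ) → ℝ) {d : Fin K → ℝ} (hd : d ∈ cube K)
    (k : Fin K) :
    ∑ a ∈ cube K, w a * (if a k = d k then 0 else 1)
      = ((∑ a ∈ cube K, w a) - d k * contrast w k) / 2 := by
  rw [contrast_eq_sum_mul, mul_sum, ← sum_sub_distrib, sum_div]
  refine sum_congr rfl fun a ha => ?_
  rcases mem_cube_iff.1 ha k with h | h <;> rcases mem_cube_iff.1 hd k with h' | h' <;>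
    norm_num [h, h']

theorem RH_eq_sum_contrast (w : (Fin K → ℝ) → ℝ) {d : Fin K → ℝ} (hd : d ∈ cube K) :
    RH w d = (1 / (K : ℝ)) * ∑ k, ((∑ a ∈ cube K, w a) - d k * contrast w k) / 2 := by
  simp_rw [← sum_mul_ite_apply_eq w hd, RH, mul_sum, mul_left_comm (w _)]
  exact sum_comm

theorem R01_eq_sub (w : (Fin K → ℝ) → ℝ) {d : Fin K → ℝ} (hd : d ∈ cube K) :
    R01 w d = (∑ a ∈ cube K, w a) - w d := by
  have h : ∀ a ∈ cube K, w a * (if a = d then 0 else 1) = w a - if a = d then w a else 0 :=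
    fun a _ => by split_ifs <;> simp
  rw [R01, sum_congr rfl h, sum_sub_distrib, sum_ite_eq' (cube K) d w, if_pos hd]

theorem mul_contrast_le_signVec (w : (Fin K → ℝ) → ℝ) {d : Fin K → ℝ} (hd : d ∈ cube K)
    (k : Fin K) : d k * contrast w k ≤ signVec w k * contrast w k := by
  unfold signVec
  rcases mem_cube_iff.1 hd k with h | h <;> split_ifs <;> simp only [h] <;> linarith

theorem mul_contrast_lt_signVec (w : (Fin K → ℝ) → ℝ) {d : Fin K → ℝ} (hd : d ∈ cube K)
    {k : Fin K} (hc : contrast w k ≠ 0) (hne : d k ≠ signVec w k) :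
    d k * contrast w k < signVec w k * contrast w k := by
  unfold signVec at hne ⊢
  rcases hc.lt_or_gt with hc | hc <;> rcases mem_cube_iff.1 hd k with h | h <;>
    simp only [h, hc, hc.not_gt, if_true, if_false] at hne ⊢ <;> first | linarith | norm_num at hne

theorem RH_signVec_le (w : (Fin K → ℝ) → ℝ) {d : Fin K → ℝ} (hd : d ∈ cube K) :
    RH w (signVec w) ≤ RH w d := by
  rw [RH_eq_sum_contrast w hd, RH_eq_sum_contrast w (signVec_mem_cube w)]
  refine mul_le_mul_of_nonneg_left (sum_le_sum fun k _ => ?_) (by positivity)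
  linarith [mul_contrast_le_signVec w hd k]

theorem RH_signVec_lt {w : (Fin K → ℝ) → ℝ} (hc : ∀ k, contrast w k ≠ 0) {d : Fin K → ℝ}
    (hd : d ∈ cube K) (hne : d ≠ signVec w) : RH w (signVec w) < RH w d := by
  obtain ⟨k, hk⟩ := Function.ne_iff.1 hne
  have hK : (0 : ℝ) < K := by exact_mod_cast k.pos
  rw [RH_eq_sum_contrast w hd, RH_eq_sum_contrast w (signVec_mem_cube w)]
  refine mul_lt_mul_of_pos_left (sum_lt_sum (fun j _ => ?_) ⟨k, mem_univ k, ?_⟩) (by positivity)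
  · linarith [mul_contrast_le_signVec w hd j]
  · linarith [mul_contrast_lt_signVec w hd (hc k) hk]

end Pointwise

section Integrated

variable {Ω : Type*} [MeasurableSpace Ω] {μ : Measure Ω} {K : ℕ} {W : Ω → (Fin K → ℝ) → ℝ}

theorem measurable_signVec (hW : ∀ a ∈ cube K, Measurable (fun x => W x a)) :
    Measurable (fun x => signVec (W x)) := by
  have hc : ∀ k, Measurable (fun x => contrast (W x) k) := fun k => by
    unfold contrast
    refine .sub ?_ ?_ <;> exact measurable_sum _ fun a ha => hW a (mem_filter.1 ha).1
  exact measurable_pi_lambda _ fun k =>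
    Measurable.ite (measurableSet_lt measurable_const (hc k)) measurable_const measurable_const

theorem integrable_sum_mul_loss (hW : ∀ a ∈ cube K, Measurable (fun x => W x a))
    (hW0 : ∀ x, ∀ a ∈ cube K, 0 ≤ W x a) (hWint : Integrable (fun x => ∑ a ∈ cube K, W x a) μ)
    {L : (Fin K → ℝ) → (Fin K → ℝ) → ℝ} (hL : ∀ a, Measurable (L a))
    (hL0 : ∀ a d, 0 ≤ L a d) (hL1 : ∀ a d, L a d ≤ 1)
    {D : Ω → Fin K → ℝ} (hD : Measurable D) :
    Integrable (fun x => ∑ a ∈ cube K, W x a * L a (D x)) μ := by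
  refine hWint.mono' ?_ (ae_of_all _ fun x => ?_)
  · exact (measurable_sum _ fun a ha => (hW a ha).mul ((hL a).comp hD)).aestronglyMeasurable
  · rw [Real.norm_eq_abs, abs_of_nonneg (sum_nonneg fun a ha => mul_nonneg (hW0 x a ha) (hL0 _ _))]
    exact sum_le_sum fun a ha => mul_le_of_le_one_right (hW0 x a ha) (hL1 _ _)

theorem integrable_RH (hW : ∀ a ∈ cube K, Measurable (fun x => W x a))
    (hW0 : ∀ x, ∀ a ∈ cube K, 0 ≤ W x a) (hWint : Integrable (fun x => ∑ a ∈ cube K, W x a) μ)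
    {D : Ω → Fin K → ℝ} (hD : Measurable D) : Integrable (fun x => RH (W x) (D x)) μ := by
  unfold RH
  refine integrable_sum_mul_loss hW hW0 hWint
    (L := fun a d => 1 / (K : ℝ) * ∑ k, if a k = d k then 0 else 1) (fun a => ?_) (fun a d => ?_)
    (fun a d => ?_) hD
  · exact measurable_const.mul <| measurable_sum _ fun k _ =>
      Measurable.ite (measurableSet_eq_fun measurable_const (measurable_pi_apply k))
        measurable_const measurable_const
  · exact mul_nonneg (by positivity) (sum_nonneg fun k _ => by split_ifs <;> norm_num)
  · rw [one_div_mul_eq_div]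
    refine div_le_one_of_le₀ ?_ K.cast_nonneg
    calc (∑ k, if a k = d k then (0 : ℝ) else 1) ≤ ∑ _k : Fin K, (1 : ℝ) :=
          sum_le_sum fun k _ => by split_ifs <;> norm_num
      _ = K := by simp

theorem integrable_R01 (hW : ∀ a ∈ cube K, Measurable (fun x => W x a))
    (hW0 : ∀ x, ∀ a ∈ cube K, 0 ≤ W x a) (hWint : Integrable (fun x => ∑ a ∈ cube K, W x a) μ)
    {D : Ω → Fin K → ℝ} (hD : Measurable D) : Integrable (fun x => R01 (W x) (D x)) μ := by
  unfold R01
  refine integrable_sum_mul_loss hW hW0 hWint (L := fun a d => if a = d then 0 else 1)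
    (fun a => ?_) (fun a d => ?_) (fun a d => ?_) hD
  · exact Measurable.ite (measurableSet_eq_fun measurable_const measurable_id)
      measurable_const measurable_const
  all_goals split_ifs <;> norm_num

end Integrated

theorem fisher_consistency_hamming_integrated_general
    {Ω : Type*} [MeasurableSpace Ω] (μ : Measure Ω)
    (K : ℕ) (W : Ω → (Fin K → ℝ) → ℝ)
    (hWmeas : ∀ a ∈ cube K, Measurable (fun x => W x a))
    (hWnonneg : ∀ x, ∀ a ∈ cube K, 0 ≤ W x a)
    (hWint : Integrable (fun x => ∑ a ∈ cube K, W x a) μ)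
    (hae : ∀ᵐ x ∂μ, (∀ k : Fin K, contrast (W x) k ≠ 0) ∧
      ∀ a ∈ cube K, W x a ≤ W x (fun k => Real.sign (contrast (W x) k)))
    (f : Ω → Fin K → ℝ) (hfmeas : Measurable f) (hfcube : ∀ x, f x ∈ cube K)
    (hfmin : ∀ D : Ω → Fin K → ℝ, Measurable D → (∀ x, D x ∈ cube K) →
      RHint μ K W f ≤ RHint μ K W D) :
    ∀ D : Ω → Fin K → ℝ, Measurable D → (∀ x, D x ∈ cube K) →
      R01int μ K W f ≤ R01int μ K W D := by
  intro D hD hDcube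
  have hs := measurable_signVec hWmeas
  have intRH {E : Ω → Fin K → ℝ} (hE : Measurable E) := integrable_RH hWmeas hWnonneg hWint hE
  have hRH_le (x : Ω) : RH (W x) (signVec (W x)) ≤ RH (W x) (f x) :=
    RH_signVec_le _ (hfcube x)
  have hRH_eq : (fun x => RH (W x) (signVec (W x))) =ᵐ[μ] fun x => RH (W x) (f x) := by
    refine (integral_eq_iff_of_ae_le (intRH hs) (intRH hfmeas) (ae_of_all _ hRH_le)).1 ?_
    exact (integral_mono (intRH hs) (intRH hfmeas) hRH_le).antisymm
      (hfmin _ hs fun x => signVec_mem_cube _)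
  refine integral_mono_ae (integrable_R01 hWmeas hWnonneg hWint hfmeas)
    (integrable_R01 hWmeas hWnonneg hWint hD) ?_
  filter_upwards [hRH_eq, hae] with x hx ⟨hc, hmax⟩
  have hfx : f x = signVec (W x) := by_contra fun hne => (RH_signVec_lt hc (hfcube x) hne).ne hx
  change R01 (W x) (f x) ≤ R01 (W x) (D x)
  rw [R01_eq_sub _ (hfcube x), R01_eq_sub _ (hDcube x), hfx, signVec_eq_sign hc]
  linarith [hmax (D x) (hDcube x)]

/-- Fisher consistency of the outcome weighted Hamming loss (integrated form
of Theorem 1). -/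
theorem fisher_consistency_hamming_integrated
    {Ω : Type*} [MeasurableSpace Ω] (μ : Measure Ω)
    (K : ℕ) (hK : 1 ≤ K) (W : Ω → (Fin K → ℝ) → ℝ)
    (hWmeas : ∀ a ∈ cube K, Measurable (fun x => W x a))
    (hWnonneg : ∀ x, ∀ a ∈ cube K, 0 ≤ W x a)
    (hWint : Integrable (fun x => ∑ a ∈ cube K, W x a) μ)
    (hae : ∀ᵐ x ∂μ, (∀ k : Fin K, contrast (W x) k ≠ 0) ∧
      ∀ a ∈ cube K, W x a ≤ W x (fun k => Real.sign (contrast (W x) k)))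
    (f : Ω → Fin K → ℝ) (hfmeas : Measurable f) (hfcube : ∀ x, f x ∈ cube K)
    (hfmin : ∀ D : Ω → Fin K → ℝ, Measurable D → (∀ x, D x ∈ cube K) →
      RHint μ K W f ≤ RHint μ K W D) :
    ∀ D : Ω → Fin K → ℝ, Measurable D → (∀ x, D x ∈ cube K) →
      R01int μ K W f ≤ R01int μ K W D :=
  fisher_consistency_hamming_integrated_general μ K W hWmeas hWnonneg hWint hae f hfmeas hfcube
    hfmin
end
end

section
/- Suppose w(a) = Σ_{k : a_k = 1} T_k + r(a) + m for all a ∈ {−1,1}^K with 2·max_{a} |r(a)| < min_{k} |T_k|. Define d* ∈ {−1,1}^K by d*_k = 1 if T_k > 0 and d*_k = −1 otherwise. Then for every d ∈ {−1,1}^K with d ≠ d*, w(d*) − w(d) ≥ min_k |T_k| − 2·max_a |r(a)| > 0; in particular, d* is the unique maximizer of w over {−1,1}^K. (Claim established in the proof of Theorem 2.) -/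
open Finset

noncomputable section

lemma mem_cube' {K : ℕ} {a : Fin K → ℝ} :
    a ∈ cube K ↔ ∀ k, a k = 1 ∨ a k = -1 := by
  constructor
  · intro h k
    simp only [cube, Finset.mem_image, Finset.mem_univ, true_and] at h
    obtain ⟨b, rfl⟩ := h
    by_cases hb : b k <;> simp [hb]
  · intro h
    simp only [cube, Finset.mem_image, Finset.mem_univ, true_and]
    refine ⟨fun k => if a k = 1 then true else false, ?_⟩
    funext k
    rcases h k with h1 | h1 <;> simp [h1] <;> norm_num

/-- The all-beneficial-treatments decision is the unique maximizer of the
weights under additive effects with small interactions (claim in the proof of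
Theorem 2). -/
theorem unique_maximizer_additive
    (K : ℕ) (hK : 1 ≤ K) (w : (Fin K → ℝ) → ℝ)
    (T : Fin K → ℝ) (r : (Fin K → ℝ) → ℝ) (m : ℝ)
    (hwform : ∀ a ∈ cube K,
      w a = (∑ k ∈ Finset.univ.filter (fun k => a k = 1), T k) + r a + m)
    (hsmall : 2 * (cube K).sup' (cube_nonempty K) (fun a => |r a|)
      < Finset.univ.inf' (univ_fin_nonempty hK) (fun k => |T k|))
    (dstar : Fin K → ℝ)
    (hdstar : ∀ k : Fin K, dstar k = if 0 < T k then 1 else -1) :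
    (∀ d ∈ cube K, d ≠ dstar →
      Finset.univ.inf' (univ_fin_nonempty hK) (fun k => |T k|)
        - 2 * (cube K).sup' (cube_nonempty K) (fun a => |r a|) ≤ w dstar - w d)
    ∧ 0 < Finset.univ.inf' (univ_fin_nonempty hK) (fun k => |T k|)
        - 2 * (cube K).sup' (cube_nonempty K) (fun a => |r a|)
    ∧ ∀ d ∈ cube K, d ≠ dstar → w d < w dstar := by

  set M := (cube K).sup' (cube_nonempty K) (fun a => |r a|) with hM
  set m0 := Finset.univ.inf' (univ_fin_nonempty hK) (fun k => |T k|) with hm0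
  have hdstar_cube : dstar ∈ cube K := mem_cube'.2 (fun k => by
    rw [hdstar k]; split <;> simp)
  have hMnonneg : 0 ≤ M := le_trans (abs_nonneg _)
    (Finset.le_sup' (fun a => |r a|) hdstar_cube)
  have hpos : 0 < m0 - 2 * M := by linarith
  have hTk : ∀ k, m0 ≤ |T k| := fun k =>
    Finset.inf'_le (fun k => |T k|) (Finset.mem_univ k)
  have hTne : ∀ k, T k ≠ 0 := by
    intro k hk
    have := hTk k
    rw [hk] at this
    simp at this
    linarith
  have hd1 : ∀ k, dstar k = 1 ↔ 0 < T k := by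
    intro k
    rw [hdstar k]
    split <;> rename_i h <;> simp [h] <;> norm_num
  have key : ∀ d ∈ cube K, d ≠ dstar → m0 - 2 * M ≤ w dstar - w d := by
    intro d hd hne
    rw [hwform dstar hdstar_cube, hwform d hd]
    have hr1 : |r dstar| ≤ M := Finset.le_sup' (fun a => |r a|) hdstar_cube
    have hr2 : |r d| ≤ M := Finset.le_sup' (fun a => |r a|) hd
    have hnonneg : ∀ k : Fin K,
        0 ≤ (if dstar k = 1 then T k else 0) - (if d k = 1 then T k else 0) := by
      intro k
      by_cases h1 : dstar k = 1 <;> by_cases h2 : d k = 1 <;> simp [h1, h2]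
      · exact le_of_lt ((hd1 k).1 h1)
      · have : ¬ 0 < T k := fun hc => h1 ((hd1 k).2 hc)
        linarith [lt_of_le_of_ne (not_lt.1 this) (hTne k)]
    obtain ⟨k0, hk0⟩ : ∃ k, d k ≠ dstar k := Function.ne_iff.1 hne
    have hbig : m0 ≤ (if dstar k0 = 1 then T k0 else 0) - (if d k0 = 1 then T k0 else 0) := by
      by_cases h1 : dstar k0 = 1
      · have h2 : d k0 ≠ 1 := fun h => hk0 (h.trans h1.symm)
        have hT : 0 < T k0 := (hd1 k0).1 h1
        simpa [h1, h2, abs_of_pos hT] using hTk k0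
      · have hT : ¬ 0 < T k0 := fun hc => h1 ((hd1 k0).2 hc)
        have hTlt : T k0 < 0 := lt_of_le_of_ne (not_lt.1 hT) (hTne k0)
        have hds : dstar k0 = -1 := by
          rcases mem_cube'.1 hdstar_cube k0 with h | h
          · exact absurd h h1
          · exact h
        have h2 : d k0 = 1 := by
          rcases mem_cube'.1 hd k0 with h | h
          · exact h
          · exact absurd (h.trans hds.symm) hk0
        simpa [h1, h2, abs_of_neg hTlt] using hTk k0
    have hsum : m0 ≤ (∑ k ∈ Finset.univ.filter (fun k => dstar k = 1), T k)
        - ∑ k ∈ Finset.univ.filter (fun k => d k = 1), T k := by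
      rw [Finset.sum_filter, Finset.sum_filter, ← Finset.sum_sub_distrib]
      calc m0 ≤ _ := hbig
        _ ≤ _ := Finset.single_le_sum (fun k _ => hnonneg k) (Finset.mem_univ k0)
    have hra := abs_le.1 hr1
    have hrb := abs_le.1 hr2
    linarith [hra.1, hra.2, hrb.1, hrb.2, hsum]
  refine ⟨key, hpos, fun d hd hne => ?_⟩
  have := key d hd hne
  linarith
end
end

section
/- Let φ : ℝ → ℝ be convex and differentiable at 0 with φ'(0) < 0. Define the surrogate risk of t ∈ ℝ^K by Φ(t) = Σ_{a ∈ {−1,1}^K} w(a)·(1/K)·Σ_{k=1}^K φ(a_k·t_k) = (1/K)·Σ_{k=1}^K [ w⁺_k·φ(t_k) + w⁻_k·φ(−t_k) ], where w⁺_k = Σ_{a : a_k = 1} w(a) and w⁻_k = Σ_{a : a_k = −1} w(a). If t* ∈ ℝ^K is a global minimizer of Φ over ℝ^K, then the decision f ∈ {−1,1}^K given by f_k = 1 if t*_k ≥ 0 and f_k = −1 if t*_k < 0 satisfies RH(f) = min_{d ∈ {−1,1}^K} RH(d). (Multi-label consistency of the surrogate loss, pointwise form of Theorem 3.) -/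
/-!
Both risks split over the coordinates: `Φ(t) = (1/K) Σ_k (w⁺_k φ(t_k) + w⁻_k φ(-t_k))`, while the
Hamming risk charges `w⁻_k` for `d_k = 1` and `w⁺_k` for `d_k = -1`. Hence `t*_k` minimizes
`g_k(s) = w⁺_k φ(s) + w⁻_k φ(-s)`, and it suffices that the sign of `t*_k` picks the larger weight.
The tangent line of `φ` at `0` gives `g_k(s) ≥ g_k(0) + φ'(0) (w⁺_k - w⁻_k) s`, so
`(w⁺_k - w⁻_k) t*_k ≥ 0`. Finally `g_k'(0) = (w⁺_k - w⁻_k) φ'(0)`, so `t*_k = 0` forces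
`w⁺_k = w⁻_k`, and then either choice of `f_k` is optimal.
-/

open Finset

noncomputable section

/-- The surrogate Hamming risk
`Φ(t) = Σ_a w(a) · (1/K) Σ_k φ(a_k t_k)`. -/
def surrogateRisk {K : ℕ} (w : (Fin K → ℝ) → ℝ) (φ : ℝ → ℝ) (t : Fin K → ℝ) : ℝ :=
  ∑ a ∈ cube K, w a * ((1 / (K : ℝ)) * ∑ k : Fin K, φ (a k * t k))

lemma ConvexOn.add_deriv_mul_sub_le {S : Set ℝ} {f : ℝ → ℝ} {x y : ℝ} (hf : ConvexOn ℝ S f)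
    (hx : x ∈ S) (hy : y ∈ S) (hd : DifferentiableAt ℝ f x) :
    f x + deriv f x * (y - x) ≤ f y := by
  rcases lt_trichotomy y x with hyx | rfl | hxy
  · have h := hf.slope_le_deriv hy hx hyx hd
    rw [slope_def_field, div_le_iff₀ (sub_pos.mpr hyx)] at h
    linarith
  · simp
  · have h := hf.deriv_le_slope hx hy hxy hd
    rw [slope_def_field, le_div_iff₀ (sub_pos.mpr hxy)] at h
    linarith

lemma isMinOn_apply_of_isMinOn_sum {ι α β : Type*} [Fintype ι] [AddCommMonoid β] [PartialOrder β]
    [IsOrderedCancelAddMonoid β] {g : ι → α → β} {t : ι → α}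
    (ht : IsMinOn (fun u : ι → α => ∑ i, g i (u i)) Set.univ t) (i : ι) :
    IsMinOn (g i) Set.univ (t i) := by
  classical
  refine isMinOn_univ_iff.mpr fun s => ?_
  have h := isMinOn_univ_iff.mp ht (Function.update t i s)
  have hrest : ∑ j ∈ univ.erase i, g j (Function.update t i s j) = ∑ j ∈ univ.erase i, g j (t j) :=
    sum_congr rfl fun j hj => by rw [Function.update_of_ne (ne_of_mem_erase hj)]
  rwa [← add_sum_erase _ _ (mem_univ i), ← add_sum_erase _ _ (mem_univ i), hrest,
    Function.update_self, add_le_add_iff_right] at h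

lemma eq_one_or_eq_neg_one_of_mem_cube {K : ℕ} {a : Fin K → ℝ} (ha : a ∈ cube K) (k : Fin K) :
    a k = 1 ∨ a k = -1 := by
  obtain ⟨b, -, rfl⟩ := mem_image.mp ha
  by_cases h : b k <;> simp [h]

def posWeight {K : ℕ} (w : (Fin K → ℝ) → ℝ) (k : Fin K) : ℝ :=
  ∑ a ∈ (cube K).filter (fun a => a k = 1), w a

def negWeight {K : ℕ} (w : (Fin K → ℝ) → ℝ) (k : Fin K) : ℝ :=
  ∑ a ∈ (cube K).filter (fun a => a k = -1), w a

lemma posWeight_nonneg {K : ℕ} {w : (Fin K → ℝ) → ℝ} (hw : ∀ a ∈ cube K, 0 ≤ w a) (k : Fin K) :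
    0 ≤ posWeight w k :=
  sum_nonneg fun a ha => hw a (mem_filter.mp ha).1

lemma negWeight_nonneg {K : ℕ} {w : (Fin K → ℝ) → ℝ} (hw : ∀ a ∈ cube K, 0 ≤ w a) (k : Fin K) :
    0 ≤ negWeight w k :=
  sum_nonneg fun a ha => hw a (mem_filter.mp ha).1

lemma sum_cube_mul_apply {K : ℕ} (w : (Fin K → ℝ) → ℝ) (k : Fin K) (G : ℝ → ℝ) :
    ∑ a ∈ cube K, w a * G (a k) = posWeight w k * G 1 + negWeight w k * G (-1) := by
  have hsplit : (cube K).filter (fun a => ¬a k = 1) = (cube K).filter (fun a => a k = -1) :=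
    filter_congr fun a ha => by
      rcases eq_one_or_eq_neg_one_of_mem_cube ha k with h | h <;> simp [h] <;> norm_num
  rw [← sum_filter_add_sum_filter_not _ (fun a => a k = 1), hsplit, posWeight, negWeight,
    sum_mul, sum_mul]
  congr 1 <;> refine sum_congr rfl fun a ha => ?_ <;> rw [(mem_filter.mp ha).2]

lemma sum_cube_mul_avg {K : ℕ} (w : (Fin K → ℝ) → ℝ) (F : (Fin K → ℝ) → Fin K → ℝ) :
    ∑ a ∈ cube K, w a * ((1 / (K : ℝ)) * ∑ k, F a k)
      = (1 / (K : ℝ)) * ∑ k, ∑ a ∈ cube K, w a * F a k := by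
  simp_rw [mul_left_comm (w _), mul_sum]
  exact sum_comm

lemma surrogateRisk_eq {K : ℕ} (w : (Fin K → ℝ) → ℝ) (φ : ℝ → ℝ) (t : Fin K → ℝ) :
    surrogateRisk w φ t
      = ∑ k, (1 / (K : ℝ)) * (posWeight w k * φ (t k) + negWeight w k * φ (-t k)) := by
  rw [surrogateRisk, sum_cube_mul_avg, mul_sum]
  refine sum_congr rfl fun k _ => ?_
  rw [sum_cube_mul_apply w k (fun x => φ (x * t k)), one_mul, neg_one_mul]

def hammingCost (p q x : ℝ) : ℝ :=
  p * (if 1 = x then 0 else 1) + q * (if -1 = x then 0 else 1)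

lemma hammingCost_one (p q : ℝ) : hammingCost p q 1 = q := by
  norm_num [hammingCost]

lemma hammingCost_neg_one (p q : ℝ) : hammingCost p q (-1) = p := by
  norm_num [hammingCost]

lemma RH_eq {K : ℕ} (w : (Fin K → ℝ) → ℝ) (d : Fin K → ℝ) :
    RH w d = (1 / (K : ℝ)) * ∑ k, hammingCost (posWeight w k) (negWeight w k) (d k) := by
  rw [RH, sum_cube_mul_avg]
  exact congrArg _ <| sum_congr rfl fun k _ =>
    sum_cube_mul_apply w k (fun x => if x = d k then 0 else 1)

lemma isMinOn_of_isMinOn_surrogateRisk {K : ℕ} {w : (Fin K → ℝ) → ℝ} {φ : ℝ → ℝ} {t : Fin K → ℝ}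
    (ht : IsMinOn (surrogateRisk w φ) Set.univ t) (k : Fin K) :
    IsMinOn (fun s => posWeight w k * φ s + negWeight w k * φ (-s)) Set.univ (t k) := by
  have hK : (0 : ℝ) < 1 / K := one_div_pos.mpr (Nat.cast_pos.mpr k.pos)
  have h := isMinOn_apply_of_isMinOn_sum
    (g := fun k s => 1 / (K : ℝ) * (posWeight w k * φ s + negWeight w k * φ (-s)))
    (funext (surrogateRisk_eq w φ) ▸ ht) k
  exact isMinOn_univ_iff.mpr fun s => le_of_mul_le_mul_left (isMinOn_univ_iff.mp h s) hK

section SignOfMinimizer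

variable {φ : ℝ → ℝ} {p q s : ℝ}

lemma sub_mul_nonneg_of_isMinOn (hp : 0 ≤ p) (hq : 0 ≤ q) (hφ : ConvexOn ℝ Set.univ φ)
    (hd : DifferentiableAt ℝ φ 0) (hneg : deriv φ 0 < 0)
    (hs : IsMinOn (fun x => p * φ x + q * φ (-x)) Set.univ s) :
    0 ≤ (p - q) * s := by
  have h₁ := hφ.add_deriv_mul_sub_le (Set.mem_univ 0) (Set.mem_univ s) hd
  have h₂ := hφ.add_deriv_mul_sub_le (Set.mem_univ 0) (Set.mem_univ (-s)) hd
  have h₀ : p * φ s + q * φ (-s) ≤ p * φ 0 + q * φ (-0) := isMinOn_univ_iff.mp hs 0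
  rw [neg_zero] at h₀
  nlinarith [mul_le_mul_of_nonneg_left h₁ hp, mul_le_mul_of_nonneg_left h₂ hq]

lemma ne_zero_of_isMinOn (hpq : p ≠ q) (hd : DifferentiableAt ℝ φ 0) (hne : deriv φ 0 ≠ 0)
    (hs : IsMinOn (fun x => p * φ x + q * φ (-x)) Set.univ s) :
    s ≠ 0 := by
  rintro rfl
  have hφ : HasDerivAt φ (deriv φ 0) (-0) := by rw [neg_zero]; exact hd.hasDerivAt
  have hg : HasDerivAt (fun x => p * φ x + q * φ (-x)) ((p - q) * deriv φ 0) 0 :=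
    ((hd.hasDerivAt.const_mul p).add ((hφ.comp 0 (hasDerivAt_neg 0)).const_mul q)).congr_deriv
      (by ring)
  exact mul_ne_zero (sub_ne_zero.mpr hpq) hne
    ((hs.isLocalMin Filter.univ_mem).hasDerivAt_eq_zero hg)

lemma le_of_isMinOn_of_nonneg (hp : 0 ≤ p) (hq : 0 ≤ q) (hφ : ConvexOn ℝ Set.univ φ)
    (hd : DifferentiableAt ℝ φ 0) (hneg : deriv φ 0 < 0)
    (hs : IsMinOn (fun x => p * φ x + q * φ (-x)) Set.univ s) (hs₀ : 0 ≤ s) :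
    q ≤ p := by
  by_contra! hpq
  have hs' := nonpos_of_mul_nonneg_right (sub_mul_nonneg_of_isMinOn hp hq hφ hd hneg hs)
    (sub_neg.mpr hpq)
  exact ne_zero_of_isMinOn hpq.ne hd hneg.ne hs (le_antisymm hs' hs₀)

lemma le_of_isMinOn_of_neg (hp : 0 ≤ p) (hq : 0 ≤ q) (hφ : ConvexOn ℝ Set.univ φ)
    (hd : DifferentiableAt ℝ φ 0) (hneg : deriv φ 0 < 0)
    (hs : IsMinOn (fun x => p * φ x + q * φ (-x)) Set.univ s) (hs₀ : s < 0) :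
    p ≤ q := by
  by_contra! hpq
  exact hs₀.not_ge (nonneg_of_mul_nonneg_right (sub_mul_nonneg_of_isMinOn hp hq hφ hd hneg hs)
    (sub_pos.mpr hpq))

lemma hammingCost_sign_le (hp : 0 ≤ p) (hq : 0 ≤ q) (hφ : ConvexOn ℝ Set.univ φ)
    (hd : DifferentiableAt ℝ φ 0) (hneg : deriv φ 0 < 0)
    (hs : IsMinOn (fun x => p * φ x + q * φ (-x)) Set.univ s) {y : ℝ} (hy : y = 1 ∨ y = -1) :
    hammingCost p q (if 0 ≤ s then 1 else -1) ≤ hammingCost p q y := by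
  by_cases hs₀ : 0 ≤ s
  · rw [if_pos hs₀, hammingCost_one]
    rcases hy with rfl | rfl
    · rw [hammingCost_one]
    · rw [hammingCost_neg_one]
      exact le_of_isMinOn_of_nonneg hp hq hφ hd hneg hs hs₀
  · rw [if_neg hs₀, hammingCost_neg_one]
    rcases hy with rfl | rfl
    · rw [hammingCost_one]
      exact le_of_isMinOn_of_neg hp hq hφ hd hneg hs (not_le.mp hs₀)
    · rw [hammingCost_neg_one]

end SignOfMinimizer

theorem surrogate_consistency_pointwise_general
    (K : ℕ) (w : (Fin K → ℝ) → ℝ)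
    (hw : ∀ a ∈ cube K, 0 ≤ w a)
    (φ : ℝ → ℝ) (hconv : ConvexOn ℝ Set.univ φ)
    (hdiff : DifferentiableAt ℝ φ 0) (hderiv : deriv φ 0 < 0)
    (tstar : Fin K → ℝ)
    (hmin : ∀ t : Fin K → ℝ, surrogateRisk w φ tstar ≤ surrogateRisk w φ t)
    (f : Fin K → ℝ)
    (hf : ∀ k : Fin K, f k = if 0 ≤ tstar k then (1 : ℝ) else -1) :
    ∀ d ∈ cube K, RH w f ≤ RH w d := by
  intro d hd
  rw [RH_eq, RH_eq]
  gcongr with k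
  rw [hf k]
  exact hammingCost_sign_le (posWeight_nonneg hw k) (negWeight_nonneg hw k) hconv hdiff hderiv
    (isMinOn_of_isMinOn_surrogateRisk (isMinOn_univ_iff.mpr hmin) k)
    (eq_one_or_eq_neg_one_of_mem_cube hd k)

/-- Multi-label consistency of the surrogate loss (pointwise form of
Theorem 3). -/
theorem surrogate_consistency_pointwise
    (K : ℕ) (hK : 1 ≤ K) (w : (Fin K → ℝ) → ℝ)
    (hw : ∀ a ∈ cube K, 0 ≤ w a)
    (φ : ℝ → ℝ) (hconv : ConvexOn ℝ Set.univ φ)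
    (hdiff : DifferentiableAt ℝ φ 0) (hderiv : deriv φ 0 < 0)
    (tstar : Fin K → ℝ)
    (hmin : ∀ t : Fin K → ℝ, surrogateRisk w φ tstar ≤ surrogateRisk w φ t)
    (f : Fin K → ℝ)
    (hf : ∀ k : Fin K, f k = if 0 ≤ tstar k then (1 : ℝ) else -1) :
    ∀ d ∈ cube K, RH w f ≤ RH w d :=
  surrogate_consistency_pointwise_general K w hw φ hconv hdiff hderiv tstar hmin f hf
end
end
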